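/- arXiv:0709.1308 — 3 statements merged into one kernel-verified Lean document; each statement's English description precedes it below -/
import Mathlib

section
/- For circuits, validity in abstract resource semantics coincides with classical tautologicity: a circuit C is valid (has a validating arrangement) if and only if C evaluates to true under every classical truth assignment, i.e., every function from atoms to Bool, where a P-port gets the value of P and a ¬P-port gets its negation. -/
/-- A literal: an atom or a negated atom. -/
inductive CLit (A : Type) : Type
  | pos : A → CLit A
  | neg : A → CLit A

/-- A node label: a port labeled by a literal, a conjunctive gate, or a disjunctive gate. -/
inductive CLab (A : Type) : Type
  | port : CLit A → CLab A
  | gand : CLab A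
  | gor : CLab A

/-- A cirquent: a finite DAG with a root that is an ancestor of all other nodes;
ports (literal-labeled nodes) have no children. -/
structure Cirquent (A : Type) : Type 1 where
  Node : Type
  fintypeNode : Fintype Node
  children : Node → List Node
  label : Node → CLab A
  root : Node
  port_no_child : ∀ v l, label v = CLab.port l → children v = []
  acyclic : WellFounded (fun x y : Node => x ∈ children y)
  root_ancestor : ∀ v, v ≠ root → Relation.TransGen (fun x y : Node => x ∈ children y) v root

namespace Cirquent

variable {A : Type}

/-- Evaluation of each node under a truth assignment `f` to the nodes (only the values on
ports matter): a port takes its assigned value, a disjunctive gate is true iff some child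
is true, a conjunctive gate is true iff all children are true. -/
noncomputable def eval (C : Cirquent A) (f : C.Node → Bool) : C.Node → Bool :=
  C.acyclic.fix fun v ih =>
    match C.label v with
    | CLab.port _ => f v
    | CLab.gor => ((C.children v).attach.map fun c => ih c.1 c.2).any id
    | CLab.gand => ((C.children v).attach.map fun c => ih c.1 c.2).all id

/-- The truth value of the cirquent: the value of its root. -/
noncomputable def value (C : Cirquent A) (f : C.Node → Bool) : Bool := C.eval f C.root

def IsPort (C : Cirquent A) (v : C.Node) : Prop := ∃ l, C.label v = CLab.port l

/-- Two ports have opposite labels: `P` and `¬P` for the same atom `P`. -/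
def Opposite (C : Cirquent A) (a b : C.Node) : Prop :=
  ∃ p, (C.label a = CLab.port (CLit.pos p) ∧ C.label b = CLab.port (CLit.neg p)) ∨
       (C.label a = CLab.port (CLit.neg p) ∧ C.label b = CLab.port (CLit.pos p))

/-- An arrangement: a set of (unordered, here represented as ordered) pairs of ports with
opposite labels, pairwise disjoint (the monogamicity condition). -/
def IsArrangement (C : Cirquent A) (α : Set (C.Node × C.Node)) : Prop :=
  (∀ p ∈ α, C.Opposite p.1 p.2) ∧
  ∀ p ∈ α, ∀ q ∈ α, p = q ∨ p = (q.2, q.1) ∨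
    ({p.1, p.2} ∩ ({q.1, q.2} : Set C.Node) = ∅)

/-- `f` is consistent with `α`: it assigns opposite values to the members of each allocation. -/
def Consistent (C : Cirquent A) (f : C.Node → Bool) (α : Set (C.Node × C.Node)) : Prop :=
  ∀ p ∈ α, f p.1 ≠ f p.2

/-- `α` is validating: it is an arrangement and the cirquent is true under every
consistent assignment. -/
def Validating (C : Cirquent A) (α : Set (C.Node × C.Node)) : Prop :=
  C.IsArrangement α ∧ ∀ f, C.Consistent f α → C.value f = true

/-- A cirquent is valid iff it has a validating arrangement. -/
def Valid (C : Cirquent A) : Prop := ∃ α, C.Validating α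

/-- A circuit: a cirquent all of whose ports have pairwise distinct labels. -/
def IsCircuit (C : Cirquent A) : Prop :=
  ∀ a b, C.IsPort a → C.IsPort b → a ≠ b → C.label a ≠ C.label b

end Cirquent

/-- The port assignment induced by a classical truth assignment `g` on atoms:
a `P`-port gets the value of `P` and a `¬P`-port gets its negation. -/
def classicalAssign {A : Type} (C : Cirquent A) (g : A → Bool) : C.Node → Bool :=
  fun v => match C.label v with
    | CLab.port (CLit.pos p) => g p
    | CLab.port (CLit.neg p) => !(g p)
    | _ => false

/-!
A classical assignment gives opposite values to opposite ports, so it is consistent with every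
arrangement; hence a valid cirquent is a tautology. Conversely, in a circuit each literal labels
at most one port, so pairing every `P`-port with the `¬P`-port is an arrangement, and an
assignment consistent with it agrees on the ports with a classical one. Since the value only
depends on the ports, a tautology is validated by this arrangement.
-/

namespace Cirquent

variable {A : Type} {C : Cirquent A}

lemma eval_eq (f : C.Node → Bool) (v : C.Node) :
    C.eval f v = match C.label v with
      | CLab.port _ => f v
      | CLab.gor => ((C.children v).attach.map fun c => C.eval f c.1).any id
      | CLab.gand => ((C.children v).attach.map fun c => C.eval f c.1).all id := by
  rw [eval, WellFounded.fix_eq]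

lemma eval_congr {f f' : C.Node → Bool} (h : ∀ v, C.IsPort v → f v = f' v) (v : C.Node) :
    C.eval f v = C.eval f' v := by
  induction v using C.acyclic.induction with
  | _ v ih =>
    rw [eval_eq, eval_eq]
    cases hl : C.label v with
    | port l => exact h v ⟨l, hl⟩
    | gand | gor =>
      dsimp only
      congr 1
      exact List.map_congr_left fun c _ => ih c.1 c.2

lemma IsCircuit.eq_of_label_eq_port (hC : C.IsCircuit) {a b : C.Node} {l : CLit A}
    (ha : C.label a = .port l) (hb : C.label b = .port l) : a = b := by
  by_contra hne
  exact hC a b ⟨l, ha⟩ ⟨l, hb⟩ hne (ha.trans hb.symm)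

lemma consistent_classicalAssign {α : Set (C.Node × C.Node)}
    (hα : ∀ q ∈ α, C.Opposite q.1 q.2) (g : A → Bool) :
    C.Consistent (classicalAssign C g) α := by
  intro q hq
  obtain ⟨p, ⟨h1, h2⟩ | ⟨h1, h2⟩⟩ := hα q hq <;> simp [classicalAssign, h1, h2]

def classicalArrangement (C : Cirquent A) : Set (C.Node × C.Node) :=
  {q | ∃ p, C.label q.1 = .port (.pos p) ∧ C.label q.2 = .port (.neg p)}

lemma IsCircuit.isArrangement_classicalArrangement (hC : C.IsCircuit) :
    C.IsArrangement C.classicalArrangement := by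
  refine ⟨fun q ⟨p, h1, h2⟩ => ⟨p, Or.inl ⟨h1, h2⟩⟩, ?_⟩
  rintro ⟨a, b⟩ ⟨p, ha : C.label a = _, hb : C.label b = _⟩
    ⟨c, d⟩ ⟨p', hc : C.label c = _, hd : C.label d = _⟩
  by_cases hpp' : p = p'
  · subst hpp'
    left
    rw [hC.eq_of_label_eq_port ha hc, hC.eq_of_label_eq_port hb hd]
  · right; right
    ext x
    simp only [Set.mem_inter_iff, Set.mem_insert_iff, Set.mem_singleton_iff,
      Set.mem_empty_iff_false, iff_false, not_and]
    rintro (rfl | rfl) (rfl | rfl) <;> simp_all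

lemma IsCircuit.exists_classicalAssign_eq (hC : C.IsCircuit) {f : C.Node → Bool}
    (hf : C.Consistent f C.classicalArrangement) :
    ∃ g : A → Bool, ∀ v, C.IsPort v → classicalAssign C g v = f v := by
  classical
  refine ⟨fun p =>
    if h : ∃ u, C.label u = .port (.pos p) then f h.choose
    else if h : ∃ w, C.label w = .port (.neg p) then !f h.choose
    else false, ?_⟩
  rintro v ⟨p | p, hv⟩
  · have hpos : ∃ u, C.label u = .port (.pos p) := ⟨v, hv⟩
    simp [classicalAssign, hv, hpos, hC.eq_of_label_eq_port hpos.choose_spec hv]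
  · by_cases hpos : ∃ u, C.label u = .port (.pos p)
    · have hne := hf (hpos.choose, v) ⟨p, hpos.choose_spec, hv⟩
      simp only [classicalAssign, hv, hpos, dite_true]
      exact (Bool.eq_not.mpr hne.symm).symm
    · have hneg : ∃ w, C.label w = .port (.neg p) := ⟨v, hv⟩
      simp [classicalAssign, hv, hpos, hneg, hC.eq_of_label_eq_port hneg.choose_spec hv]

end Cirquent

/-- For circuits, validity in abstract resource semantics coincides with classical
tautologicity. -/
theorem stmt6 {A : Type} (C : Cirquent A) (hC : C.IsCircuit) :
    C.Valid ↔ ∀ g : A → Bool, C.value (classicalAssign C g) = true := by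
  constructor
  · rintro ⟨α, ⟨hopp, _⟩, hval⟩ g
    exact hval _ (Cirquent.consistent_classicalAssign hopp g)
  · intro htaut
    refine ⟨C.classicalArrangement, hC.isArrangement_classicalArrangement, fun f hf => ?_⟩
    obtain ⟨g, hg⟩ := hC.exists_classicalAssign_eq hf
    rw [Cirquent.value, ← Cirquent.eval_congr hg]
    exact htaut g
end

section
/- The cirquent of Figure 5 — with six ports labeled ¬P (numbered 1–6) and six ports labeled P (numbered 7–12); ∧-gates over {1,2},{3,4},{5,6},{7,8},{9,10},{11,12}; an ∨-gate over the first three ∧-gates, an ∨-gate over the last three ∧-gates; and a root ∧-gate over the two ∨-gates — is not valid: no arrangement for it is validating. -/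
theorem stmt11_general (α : Finset (Fin 12 × Fin 12))
    (hopp : ∀ p ∈ α, (p.1 : ℕ) < 6 ∧ 6 ≤ (p.2 : ℕ)) :
    ∃ f : Fin 12 → Bool,
      (∀ p ∈ α, f p.1 ≠ f p.2) ∧
      (((f 0 && f 1) || ((f 2 && f 3) || (f 4 && f 5))) &&
       ((f 6 && f 7) || ((f 8 && f 9) || (f 10 && f 11)))) = false := by
  -- Every ¬P-port false and every P-port true: consistent with any arrangement, since each
  -- pair joins a ¬P-port to a P-port, and it fails every ∧-gate under the first ∨-gate.
  refine ⟨fun i => decide (6 ≤ (i : ℕ)), fun p hp => ?_, by decide⟩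
  obtain ⟨hneg, hpos⟩ := hopp p hp
  simp [Nat.not_le.mpr hneg, hpos]

/-- The cirquent of Figure 5: six ports labeled ¬P (indices 0–5) and six ports labeled P
(indices 6–11); ∧-gates over {1,2},{3,4},{5,6},{7,8},{9,10},{11,12}; an ∨-gate over the
first three ∧-gates and one over the last three; root ∧-gate over the two ∨-gates.
It is not valid: for every arrangement (a set of pairwise disjoint pairs each consisting
of one ¬P-port and one P-port) there is a consistent assignment making the cirquent
false. -/
theorem stmt11 (α : Finset (Fin 12 × Fin 12))
    (hopp : ∀ p ∈ α, (p.1 : ℕ) < 6 ∧ 6 ≤ (p.2 : ℕ))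
    (hdisj : ∀ p ∈ α, ∀ q ∈ α, p ≠ q → p.1 ≠ q.1 ∧ p.2 ≠ q.2) :
    ∃ f : Fin 12 → Bool,
      (∀ p ∈ α, f p.1 ≠ f p.2) ∧
      (((f 0 && f 1) || ((f 2 && f 3) || (f 4 && f 5))) &&
       ((f 6 && f 7) || ((f 8 && f 9) || (f 10 && f 11)))) = false :=
  stmt11_general α hopp
end

section
/- The tree-like cirquent corresponding to the formula ¬P ∨ (¬Q ∧ P₁) ∨ (P₂ ∧ ¬R) ∨ (Q ∧ R), where P₁ and P₂ are two separate ports both labeled P (the right cirquent of Figure 2), is not valid: for every arrangement α there exists a truth assignment consistent with α under which the cirquent is false. -/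
/-!
The formula is a classical tautology, but the two `P`-ports may receive different values.
By monogamicity the `¬P`-port is linked to at most one of them: make `¬P` false, the `P`-port
it is not linked to false and the other one true. Then `Q` and `R` can be chosen, respecting
the links `¬Q–Q` and `¬R–R`, so that the other two conjunctions are false as well.
-/

/-- The right cirquent of Figure 2, the tree-like cirquent of
¬P ∨ (¬Q ∧ P₁) ∨ (P₂ ∧ ¬R) ∨ (Q ∧ R) with seven ports (indices):
0:¬P, 1:¬Q, 2:P₁, 3:P₂, 4:¬R, 5:Q, 6:R, where P₁ and P₂ are two separate P-ports.
It is not valid: the only possible allocations are {0,2},{0,3},{1,5},{4,6}, and by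
monogamicity {0,2} and {0,3} cannot both occur; for every such arrangement there is a
consistent truth assignment making the cirquent false. -/
theorem stmt12 (α : Finset (Fin 7 × Fin 7))
    (hopp : ∀ p ∈ α, p = ((0 : Fin 7), (2 : Fin 7)) ∨ p = ((0 : Fin 7), (3 : Fin 7)) ∨
      p = ((1 : Fin 7), (5 : Fin 7)) ∨ p = ((4 : Fin 7), (6 : Fin 7)))
    (hmono : ¬(((0 : Fin 7), (2 : Fin 7)) ∈ α ∧ ((0 : Fin 7), (3 : Fin 7)) ∈ α)) :
    ∃ f : Fin 7 → Bool,
      (∀ p ∈ α, f p.1 ≠ f p.2) ∧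
      (f 0 || ((f 1 && f 2) || ((f 3 && f 4) || (f 5 && f 6)))) = false := by
  by_cases h02 : ((0 : Fin 7), (2 : Fin 7)) ∈ α
  · have h03 : ((0 : Fin 7), (3 : Fin 7)) ∉ α := fun h03 => hmono ⟨h02, h03⟩
    refine ⟨![false, false, true, false, true, true, false], fun p hp => ?_, rfl⟩
    rcases hopp p hp with rfl | rfl | rfl | rfl
    exacts [by decide, absurd hp h03, by decide, by decide]
  · refine ⟨![false, true, false, true, false, false, true], fun p hp => ?_, rfl⟩
    rcases hopp p hp with rfl | rfl | rfl | rfl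
    exacts [absurd hp h02, by decide, by decide, by decide]
end
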